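/- arXiv:2601.19211 — 5 statements merged into one kernel-verified Lean document; each statement's English description precedes it below -/
import Mathlib

section
/- Let f : [0,∞) → ℝ be continuous at 0, piecewise continuous, and of exponential order δ ≥ 0, and let F(s) = ∫₀^∞ e^{-sτ} f(τ) dτ be its Laplace transform. Then lim_{s → ∞} s · F(s) = f(0). -/
open MeasureTheory Real Filter

/-- Laplace transform `F(s) = ∫₀^∞ e^{-sτ} f(τ) dτ`. -/
noncomputable def laplace (f : ℝ → ℝ) (s : ℝ) : ℝ :=
  ∫ τ in Set.Ioi (0:ℝ), Real.exp (-s * τ) * f τ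

/-- `f` is of exponential order `δ`: `|f(τ)| ≤ M e^{δτ}` for all `τ ≥ 0`, for some `M > 0`. -/
def ExpOrder (f : ℝ → ℝ) (δ : ℝ) : Prop :=
  ∃ M > (0:ℝ), ∀ τ ≥ (0:ℝ), |f τ| ≤ M * Real.exp (δ * τ)

/-- `f` is piecewise continuous on `[0,∞)`: on every compact interval `[0,T]` it is
continuous except possibly at finitely many points. -/
def PiecewiseContinuous (f : ℝ → ℝ) : Prop :=
  ∀ T > (0:ℝ), ∃ S : Finset ℝ, ContinuousOn f (Set.Icc 0 T \ (S : Set ℝ))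

lemma aesm_of_pc {f : ℝ → ℝ} (hpc : PiecewiseContinuous f) :
    AEStronglyMeasurable f (volume.restrict (Set.Ioi (0:ℝ))) := by
  have h : Set.Ioi (0:ℝ) = ⋃ n : ℕ, Set.Ioc 0 ((n:ℝ)+1) := by
    ext x
    simp only [Set.mem_Ioi, Set.mem_iUnion, Set.mem_Ioc]
    constructor
    · intro hx
      obtain ⟨n, hn⟩ := exists_nat_gt x
      exact ⟨n, hx, by push_cast; linarith⟩
    · rintro ⟨n, hx, -⟩; exact hx
  rw [h, aestronglyMeasurable_iUnion_iff]
  intro n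
  obtain ⟨S, hS⟩ := hpc ((n:ℝ)+1) (by positivity)
  have hm : MeasurableSet (Set.Icc (0:ℝ) ((n:ℝ)+1) \ (S : Set ℝ)) :=
    measurableSet_Icc.diff S.finite_toSet.measurableSet
  have h1 : AEStronglyMeasurable f (volume.restrict (Set.Icc (0:ℝ) ((n:ℝ)+1) \ (S:Set ℝ))) :=
    hS.aestronglyMeasurable hm
  have h2 : volume.restrict (Set.Icc (0:ℝ) ((n:ℝ)+1) \ (S:Set ℝ))
      = volume.restrict (Set.Icc (0:ℝ) ((n:ℝ)+1)) := by
    apply Measure.restrict_congr_set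
    refine (MeasureTheory.diff_ae_eq_self).2 ?_
    exact measure_mono_null Set.inter_subset_right (S.finite_toSet.measure_zero volume)
  rw [h2] at h1
  exact h1.mono_measure (Measure.restrict_mono Set.Ioc_subset_Icc_self le_rfl)

/-- Initial value theorem: if `f` is continuous at `0` (from the right), piecewise
continuous and of exponential order `δ ≥ 0`, then `s · F(s) → f(0)` as `s → ∞`. -/
theorem initial_value_theorem (δ : ℝ) (hδ : 0 ≤ δ) (f : ℝ → ℝ)
    (hc0 : ContinuousWithinAt f (Set.Ici 0) 0)
    (hpc : PiecewiseContinuous f) (ho : ExpOrder f δ) :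
    Tendsto (fun s => s * laplace f s) atTop (nhds (f 0)) := by
  obtain ⟨M, hM, hMf⟩ := ho
  -- indicator version of f, globally a.e. strongly measurable
  set g : ℝ → ℝ := (Set.Ioi (0:ℝ)).indicator f with hg_def
  have hg : AEStronglyMeasurable g volume :=
    (aestronglyMeasurable_indicator_iff measurableSet_Ioi).2 (aesm_of_pc hpc)
  -- key: for s > 0, s * laplace f s = ∫ u in Ioi 0, exp (-u) * f (u / s)
  have key : ∀ s : ℝ, 0 < s →
      s * laplace f s = ∫ u in Set.Ioi (0:ℝ), Real.exp (-u) * f (u / s) := by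
    intro s hs
    have := integral_comp_mul_left_Ioi (fun u => Real.exp (-u) * f (u / s)) 0 hs
    simp only [mul_zero, smul_eq_mul] at this
    have heq : (fun τ => Real.exp (-(s * τ)) * f (s * τ / s)) =
        fun τ => Real.exp (-s * τ) * f τ := by
      funext τ
      rw [mul_div_cancel_left₀ _ (ne_of_gt hs), neg_mul]
    rw [heq] at this
    rw [laplace, this, ← mul_assoc, mul_inv_cancel₀ (ne_of_gt hs), one_mul]
  -- target integral
  have htarget : (∫ u in Set.Ioi (0:ℝ), Real.exp (-u) * f 0) = f 0 := by
    rw [integral_mul_const, integral_exp_neg_Ioi_zero, one_mul]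
  -- dominated convergence
  have hmain : Tendsto (fun s : ℝ => ∫ u in Set.Ioi (0:ℝ), Real.exp (-u) * f (u / s))
      atTop (nhds (∫ u in Set.Ioi (0:ℝ), Real.exp (-u) * f 0)) := by
    apply tendsto_integral_filter_of_dominated_convergence
      (fun u => M * Real.exp (-(1/2) * u))
    · -- measurability
      filter_upwards [eventually_gt_atTop (0:ℝ)] with s hs
      have hq : Measure.QuasiMeasurePreserving (fun u : ℝ => u / s) volume volume := by
        refine ⟨(measurable_id.div_const s), ?_⟩
        have : (fun u : ℝ => u / s) = fun u => s⁻¹ * u := by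
          funext u; rw [div_eq_inv_mul]
        rw [this, Real.map_volume_mul_left (inv_ne_zero (ne_of_gt hs))]
        exact Measure.absolutelyContinuous_of_le_smul le_rfl
      have h1 : AEStronglyMeasurable (fun u => Real.exp (-u) * g (u / s)) volume :=
        (Real.continuous_exp.comp continuous_neg).aestronglyMeasurable.mul
          (hg.comp_quasiMeasurePreserving hq)
      refine (h1.restrict).congr ?_
      refine (ae_restrict_iff' measurableSet_Ioi).2 (ae_of_all _ fun u hu => ?_)
      have : u / s ∈ Set.Ioi (0:ℝ) := div_pos hu hs
      simp only [hg_def, Set.indicator_of_mem this]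
    · -- bound
      filter_upwards [eventually_ge_atTop (max (2*δ) 1)] with s hs
      have hs1 : (1:ℝ) ≤ s := le_trans (le_max_right _ _) hs
      have hs0 : (0:ℝ) < s := lt_of_lt_of_le one_pos hs1
      have hs2 : 2*δ ≤ s := le_trans (le_max_left _ _) hs
      refine (ae_restrict_iff' measurableSet_Ioi).2 (ae_of_all _ fun u hu => ?_)
      have hu0 : 0 < u := hu
      have hus : 0 ≤ u / s := le_of_lt (div_pos hu0 hs0)
      have hb := hMf (u/s) hus
      have hexp : δ * (u/s) ≤ (1/2) * u := by
        rw [mul_div_assoc', div_le_iff₀ hs0]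
        nlinarith
      calc ‖Real.exp (-u) * f (u/s)‖ = Real.exp (-u) * |f (u/s)| := by
            rw [norm_mul, Real.norm_eq_abs, abs_of_pos (Real.exp_pos _), Real.norm_eq_abs]
        _ ≤ Real.exp (-u) * (M * Real.exp (δ * (u/s))) := by
            exact mul_le_mul_of_nonneg_left hb (le_of_lt (Real.exp_pos _))
        _ ≤ Real.exp (-u) * (M * Real.exp ((1/2) * u)) := by
            refine mul_le_mul_of_nonneg_left ?_ (le_of_lt (Real.exp_pos _))
            exact mul_le_mul_of_nonneg_left (Real.exp_le_exp.2 hexp) (le_of_lt hM)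
        _ = M * Real.exp (-(1/2) * u) := by
            rw [mul_left_comm, ← Real.exp_add]
            congr 1
            ring
    · -- integrable bound
      exact (exp_neg_integrableOn_Ioi 0 (by norm_num : (0:ℝ) < 1/2)).const_mul M
    · -- pointwise limit
      refine (ae_restrict_iff' measurableSet_Ioi).2 (ae_of_all _ fun u hu => ?_)
      have hu0 : (0:ℝ) < u := hu
      have h1 : Tendsto (fun s : ℝ => u / s) atTop (nhdsWithin 0 (Set.Ici 0)) := by
        rw [tendsto_nhdsWithin_iff]
        constructor
        · exact Tendsto.div_atTop tendsto_const_nhds tendsto_id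
        · filter_upwards [eventually_gt_atTop (0:ℝ)] with s hs
          exact le_of_lt (div_pos hu0 hs)
      have h2 : Tendsto (fun s : ℝ => f (u / s)) atTop (nhds (f 0)) := hc0.tendsto.comp h1
      exact (h2.const_mul (Real.exp (-u)))
  rw [← htarget]
  refine hmain.congr' ?_
  filter_upwards [eventually_gt_atTop (0:ℝ)] with s hs
  exact (key s hs).symm
end

section
/- Let 0 < γ < 1, δ ≥ 0, n ∈ ℕ, and let f : [0,∞) → ℝ be piecewise continuous of exponential order δ with Laplace transform F(s) = ∫₀^∞ e^{-sτ} f(τ) dτ. Suppose the iterated Caputo derivatives D^{jγ} f exist for 0 ≤ j ≤ n+1, that for all s > δ the identity ∫₀^∞ e^{-sτ} D^{(n+1)γ} f(τ) dτ = s^{(n+1)γ} F(s) − Σ_{j=0}^{n} s^{(n+1−j)γ−1} (D^{jγ} f)(0) holds, and that |s · ∫₀^∞ e^{-sτ} D^{(n+1)γ} f(τ) dτ| ≤ M for all s > δ. Then the remainder R_n(s) := F(s) − Σ_{k=0}^{n} (D^{kγ} f)(0) / s^{kγ+1} satisfies |R_n(s)| ≤ M / s^{(n+1)γ+1} for all s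 > δ. -/
open MeasureTheory Real Filter

/-- Caputo fractional derivative of order `γ` of a function `f : [0,∞) → ℝ`
(modelled as `f : ℝ → ℝ`, with the derivative taken within `[0,∞)`):
`D^γ f(τ) = (1/Γ(1−γ)) ∫₀^τ f'(ρ) (τ−ρ)^{−γ} dρ`. -/
noncomputable def caputo (γ : ℝ) (f : ℝ → ℝ) (τ : ℝ) : ℝ :=
  (1 / Real.Gamma (1 - γ)) *
    ∫ ρ in (0:ℝ)..τ, derivWithin f (Set.Ici 0) ρ * (τ - ρ) ^ (-γ)

/-- Bound on the remainder of the `γ`-singular Laurent series of `F(s)`: if the Laplace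
transform of `D^{(n+1)γ} f` satisfies the usual formula and `|s·L{D^{(n+1)γ}f}(s)| ≤ M`
for `s > δ`, then `|F(s) − Σ_{k=0}^{n} (D^{kγ}f)(0)/s^{kγ+1}| ≤ M / s^{(n+1)γ+1}`. -/
theorem remainder_bound (γ δ M : ℝ) (n : ℕ) (hγ0 : 0 < γ) (hγ1 : γ < 1) (hδ : 0 ≤ δ)
    (f : ℝ → ℝ) (hpc : PiecewiseContinuous f) (ho : ExpOrder f δ)
    (hlap : ∀ s > δ, laplace ((caputo γ)^[n + 1] f) s
      = s ^ (((n : ℝ) + 1) * γ) * laplace f s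
        - ∑ j ∈ Finset.range (n + 1),
            s ^ ((((n : ℝ) + 1) - (j : ℝ)) * γ - 1) * ((caputo γ)^[j] f) 0)
    (hbd : ∀ s > δ, |s * laplace ((caputo γ)^[n + 1] f) s| ≤ M) :
    ∀ s > δ,
      |laplace f s - ∑ k ∈ Finset.range (n + 1), ((caputo γ)^[k] f) 0 / s ^ ((k : ℝ) * γ + 1)|
        ≤ M / s ^ (((n : ℝ) + 1) * γ + 1) := by
  intro s hs
  have hs0 : 0 < s := lt_of_le_of_lt hδ hs
  set A := ((n : ℝ) + 1) * γ with hA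
  have hAp : (0:ℝ) < s ^ A := Real.rpow_pos_of_pos hs0 _
  set L := laplace ((caputo γ)^[n + 1] f) s with hL
  have hsum : ∑ j ∈ Finset.range (n + 1),
      s ^ ((((n : ℝ) + 1) - (j : ℝ)) * γ - 1) * ((caputo γ)^[j] f) 0
      = s ^ A * ∑ k ∈ Finset.range (n + 1), ((caputo γ)^[k] f) 0 / s ^ ((k : ℝ) * γ + 1) := by
    rw [Finset.mul_sum]
    refine Finset.sum_congr rfl fun j _ => ?_
    have he : (((n : ℝ) + 1) - (j : ℝ)) * γ - 1 = A + (-((j : ℝ) * γ + 1)) := by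
      rw [hA]; ring
    rw [he, Real.rpow_add hs0, Real.rpow_neg hs0.le, div_eq_mul_inv]
    ring
  have h1 := hlap s hs
  rw [← hL, hsum] at h1
  have key : laplace f s - ∑ k ∈ Finset.range (n + 1),
      ((caputo γ)^[k] f) 0 / s ^ ((k : ℝ) * γ + 1) = L / s ^ A := by
    rw [eq_div_iff hAp.ne', h1]; ring
  rw [key, abs_div, abs_of_pos hAp, Real.rpow_add hs0, Real.rpow_one,
    div_le_div_iff₀ hAp (mul_pos hAp hs0)]
  have hb := hbd s hs
  rw [abs_mul, abs_of_pos hs0] at hb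
  nlinarith [abs_nonneg L, hAp]
end

section
/- Let 0 < γ ≤ 1 and let (p_n)_{n≥0} be real coefficients satisfying |p_n| ≤ C K^n for some C, K > 0. Define f(τ) = Σ_{n=0}^∞ p_n τ^{nγ}/Γ(nγ+1) for τ ≥ 0. Then there exists δ ≥ 0 such that for every s > δ, the Laplace transform of f satisfies ∫₀^∞ e^{-sτ} f(τ) dτ = Σ_{n=0}^∞ p_n / s^{nγ+1}. -/
open MeasureTheory Real Filter

lemma integrableOn_rpow_mul_exp_aux {a r : ℝ} (ha : 0 ≤ a) (hr : 0 < r) :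
    MeasureTheory.IntegrableOn (fun t : ℝ => t ^ a * Real.exp (-(r * t))) (Set.Ioi 0) := by
  have h1 : MeasureTheory.IntegrableOn (fun x : ℝ => Real.exp (-x) * x ^ ((a + 1) - 1))
      (Set.Ioi 0) := Real.GammaIntegral_convergent (by linarith)
  have h2 : MeasureTheory.IntegrableOn
      (fun t : ℝ => Real.exp (-(r * t)) * (r * t) ^ ((a + 1) - 1)) (Set.Ioi 0) := by
    have := (MeasureTheory.integrableOn_Ioi_comp_mul_left_iff
      (fun x : ℝ => Real.exp (-x) * x ^ ((a + 1) - 1)) 0 hr).mpr (by simpa using h1)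
    simpa using this
  have h3 := h2.const_mul ((r : ℝ) ^ a)⁻¹
  refine MeasureTheory.IntegrableOn.congr_fun h3 (fun t ht => ?_) measurableSet_Ioi
  have ht0 : (0:ℝ) < t := ht
  have hra : (0:ℝ) < r ^ a := Real.rpow_pos_of_pos hr a
  rw [add_sub_cancel_right, Real.mul_rpow hr.le ht0.le]
  field_simp

lemma integral_rpow_mul_exp_aux {a r : ℝ} (ha : 0 ≤ a) (hr : 0 < r) :
    ∫ t in Set.Ioi (0:ℝ), t ^ a * Real.exp (-(r * t))
      = (1 / r) ^ (a + 1) * Real.Gamma (a + 1) := by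
  have := Real.integral_rpow_mul_exp_neg_mul_Ioi (a := a + 1) (r := r) (by linarith) hr
  rw [← this]
  refine setIntegral_congr_fun measurableSet_Ioi (fun t ht => ?_)
  rw [add_sub_cancel_right]

/-- Term-by-term Laplace transform of a fractional power series: if `|pₙ| ≤ C Kⁿ` and
`f(τ) = Σ pₙ τ^{nγ}/Γ(nγ+1)`, then there is `δ ≥ 0` such that for all `s > δ`,
`L{f}(s) = Σ pₙ / s^{nγ+1}`. -/
theorem laplace_fps (γ C K : ℝ) (hγ0 : 0 < γ) (hγ1 : γ ≤ 1) (hC : 0 < C) (hK : 0 < K)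
    (p : ℕ → ℝ) (hp : ∀ n : ℕ, |p n| ≤ C * K ^ n) (f : ℝ → ℝ)
    (hf : ∀ τ : ℝ, 0 ≤ τ →
      f τ = ∑' n : ℕ, p n * τ ^ ((n : ℝ) * γ) / Real.Gamma ((n : ℝ) * γ + 1)) :
    ∃ δ : ℝ, 0 ≤ δ ∧ ∀ s > δ,
      laplace f s = ∑' n : ℕ, p n / s ^ ((n : ℝ) * γ + 1) := by
  refine ⟨K ^ (1 / γ), (Real.rpow_pos_of_pos hK _).le, fun s hs => ?_⟩
  have hs0 : (0:ℝ) < s := lt_trans (Real.rpow_pos_of_pos hK _) hs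
  have hKs : K < s ^ γ := by
    have := Real.rpow_lt_rpow (Real.rpow_pos_of_pos hK _).le hs hγ0
    rwa [← Real.rpow_mul hK.le, one_div_mul_cancel hγ0.ne', Real.rpow_one] at this
  have hsγ : (0:ℝ) < s ^ γ := Real.rpow_pos_of_pos hs0 γ
  set F : ℕ → ℝ → ℝ := fun n τ =>
    Real.exp (-s * τ) * (p n * τ ^ ((n : ℝ) * γ) / Real.Gamma ((n : ℝ) * γ + 1)) with hF
  have hGamma : ∀ n : ℕ, 0 < Real.Gamma ((n : ℝ) * γ + 1) := fun n =>
    Real.Gamma_pos_of_pos (by positivity)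
  have hnγ : ∀ n : ℕ, (0:ℝ) ≤ (n : ℝ) * γ := fun n => by positivity
  -- integrability of each term
  have hint : ∀ n : ℕ, MeasureTheory.IntegrableOn (F n) (Set.Ioi 0) := by
    intro n
    have h := (integrableOn_rpow_mul_exp_aux (hnγ n) hs0).const_mul
      (p n / Real.Gamma ((n : ℝ) * γ + 1))
    refine MeasureTheory.IntegrableOn.congr_fun h (fun τ hτ => ?_) measurableSet_Ioi
    simp only [hF, neg_mul]
    ring
  -- value of each integral
  have hval : ∀ n : ℕ, ∫ τ in Set.Ioi (0:ℝ), F n τ = p n / s ^ ((n : ℝ) * γ + 1) := by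
    intro n
    have h1 : ∫ τ in Set.Ioi (0:ℝ), F n τ
        = (p n / Real.Gamma ((n : ℝ) * γ + 1)) *
          ∫ τ in Set.Ioi (0:ℝ), τ ^ ((n : ℝ) * γ) * Real.exp (-(s * τ)) := by
      rw [← MeasureTheory.integral_const_mul]
      refine setIntegral_congr_fun measurableSet_Ioi (fun τ hτ => ?_)
      simp only [hF, neg_mul]
      ring
    rw [h1, integral_rpow_mul_exp_aux (hnγ n) hs0, one_div, Real.inv_rpow hs0.le]
    field_simp
  -- value of each norm integral
  have hnorm : ∀ n : ℕ, ∫ τ in Set.Ioi (0:ℝ), ‖F n τ‖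
      = |p n| / s ^ ((n : ℝ) * γ + 1) := by
    intro n
    have h1 : ∫ τ in Set.Ioi (0:ℝ), ‖F n τ‖
        = (|p n| / Real.Gamma ((n : ℝ) * γ + 1)) *
          ∫ τ in Set.Ioi (0:ℝ), τ ^ ((n : ℝ) * γ) * Real.exp (-(s * τ)) := by
      rw [← MeasureTheory.integral_const_mul]
      refine setIntegral_congr_fun measurableSet_Ioi (fun τ hτ => ?_)
      have hτ0 : (0:ℝ) < τ := hτ
      have hτγ : (0:ℝ) ≤ τ ^ ((n : ℝ) * γ) := Real.rpow_nonneg hτ0.le _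
      simp only [hF, Real.norm_eq_abs, abs_mul, abs_div, Real.abs_exp,
        abs_of_nonneg hτγ, abs_of_pos (hGamma n), neg_mul]
      ring
    rw [h1, integral_rpow_mul_exp_aux (hnγ n) hs0, one_div, Real.inv_rpow hs0.le]
    field_simp
  -- summability of norms
  have hsum : Summable (fun n : ℕ => ∫ τ in Set.Ioi (0:ℝ), ‖F n τ‖) := by
    have hratio : K / s ^ γ < 1 := (div_lt_one hsγ).mpr hKs
    have hratio0 : (0:ℝ) ≤ K / s ^ γ := by positivity
    have hgeom : Summable (fun n : ℕ => C / s * (K / s ^ γ) ^ n) :=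
      (summable_geometric_of_lt_one hratio0 hratio).mul_left _
    refine Summable.of_nonneg_of_le (fun n => ?_) (fun n => ?_) hgeom
    · rw [hnorm n]; positivity
    · rw [hnorm n]
      have hpow : s ^ ((n : ℝ) * γ + 1) = (s ^ γ) ^ n * s := by
        rw [Real.rpow_add hs0, Real.rpow_one, mul_comm (n:ℝ) γ, Real.rpow_mul hs0.le,
          Real.rpow_natCast]
      rw [hpow]
      calc |p n| / ((s ^ γ) ^ n * s) ≤ (C * K ^ n) / ((s ^ γ) ^ n * s) := by
            gcongr
            exact hp n
        _ = C / s * (K / s ^ γ) ^ n := by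
            rw [div_pow]
            field_simp
  -- term-by-term integration
  have key := MeasureTheory.integral_tsum_of_summable_integral_norm hint hsum
  have h2 : laplace f s = ∫ τ in Set.Ioi (0:ℝ), ∑' n : ℕ, F n τ := by
    unfold laplace
    refine setIntegral_congr_fun measurableSet_Ioi (fun τ hτ => ?_)
    have hτ0 : (0:ℝ) < τ := hτ
    rw [hf τ hτ0.le, hF]
    exact (tsum_mul_left).symm
  rw [h2, ← key]
  exact tsum_congr fun n => (hval n)
end

section
/- Let 0 < γ < 1 and let (p_n)_{n≥0} be real coefficients satisfying |p_n| ≤ C K^n for some C, K > 0, and define f(τ) = Σ_{n=0}^∞ p_n τ^{nγ}/Γ(nγ+1) for τ ≥ 0. Then for every n ∈ ℕ, the n-fold iterated Caputo derivative D^{nγ} f exists on (0,∞), equals Σ_{k=0}^∞ p_{n+k} τ^{kγ}/Γ(kγ+1), and its limit as τ → 0⁺ equals p_n. -/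
open MeasureTheory Real Filter

/-!
Termwise, `D^γ` sends `τ ^ s / Γ(s + 1)` (`s > 0`) to `τ ^ (s - γ) / Γ(s - γ + 1)`: after
differentiating, the Caputo integral is a Beta integral. Hence `D^γ` shifts the coefficient
sequence of `Σ pₖ τ^{kγ} / Γ(kγ + 1)`, and the geometric bound `|pₖ| ≤ C Kᵏ` survives the shift.
The termwise operations are justified by the bound `y ^ s ≤ eʸ Γ(s + 1)`, read off Euler's
integral, which makes `Σ xᵏ / Γ(kγ + 1)` converge for every `x`. The limit at `0⁺` is the
constant term, by uniform convergence on `[0, 1]`.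
-/

open Set

theorem rpow_le_exp_mul_Gamma_add_one {s y : ℝ} (hs : 0 ≤ s) (hy : 0 ≤ y) :
    y ^ s ≤ exp y * Gamma (s + 1) := by
  have hint : IntegrableOn (fun x => exp (-x) * x ^ s) (Ioi 0) := by
    simpa using GammaIntegral_convergent (s := s + 1) (by linarith)
  have htail : y ^ s * exp (-y) ≤ ∫ x in Ioi 0, exp (-x) * x ^ s :=
    calc y ^ s * exp (-y) = ∫ x in Ioi y, y ^ s * exp (-x) := by
          rw [integral_const_mul, integral_exp_neg_Ioi]
      _ ≤ ∫ x in Ioi y, exp (-x) * x ^ s :=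
          setIntegral_mono_on ((integrableOn_exp_neg_Ioi y).const_mul _)
            (hint.mono_set (Ioi_subset_Ioi hy)) measurableSet_Ioi fun x hx => by
              rw [mul_comm]
              gcongr
              exact le_of_lt hx
      _ ≤ ∫ x in Ioi 0, exp (-x) * x ^ s :=
          setIntegral_mono_set hint
            (ae_restrict_of_forall_mem measurableSet_Ioi fun x hx =>
              (mul_pos (exp_pos _) (rpow_pos_of_pos hx s)).le)
            (Ioi_subset_Ioi hy).eventuallyLE
  rw [Gamma_eq_integral (by linarith), add_sub_cancel_right]
  calc y ^ s = exp y * (y ^ s * exp (-y)) := by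
        rw [mul_left_comm, ← exp_add, add_neg_cancel, exp_zero, mul_one]
    _ ≤ _ := by gcongr

theorem summable_pow_div_Gamma {γ : ℝ} (hγ : 0 < γ) (x : ℝ) :
    Summable fun k : ℕ => x ^ k / Gamma (k * γ + 1) := by
  -- with `y ^ γ = 2 |x|`, the bound `y ^ s ≤ exp y * Γ(s + 1)` gives terms `≤ exp y * 2⁻ᵏ`
  set y := (2 * |x|) ^ γ⁻¹
  have hy : y ^ γ = 2 * |x| := rpow_inv_rpow (by positivity) hγ.ne'
  refine .of_norm_bounded (summable_geometric_two.mul_left (exp y)) fun k => ?_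
  have hΓ : 0 < Gamma (k * γ + 1) := Gamma_pos_of_pos (by positivity)
  have hyk : y ^ ((k : ℝ) * γ) = 2 ^ k * |x| ^ k := by
    rw [mul_comm, rpow_mul_natCast (by positivity), hy, mul_pow]
  have hyΓ := rpow_le_exp_mul_Gamma_add_one (s := k * γ) (by positivity) (by positivity : 0 ≤ y)
  rw [hyk] at hyΓ
  rw [norm_div, norm_pow, Real.norm_eq_abs, Real.norm_of_nonneg hΓ.le, div_le_iff₀ hΓ]
  calc |x| ^ k = (1 / 2) ^ k * (2 ^ k * |x| ^ k) := by
        rw [← mul_assoc, ← mul_pow]; norm_num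
    _ ≤ (1 / 2) ^ k * (exp y * Gamma (k * γ + 1)) := by gcongr
    _ = _ := by ring

theorem summable_nat_mul_pow_div_Gamma {γ : ℝ} (hγ : 0 < γ) (x : ℝ) :
    Summable fun k : ℕ => k * x ^ k / Gamma (k * γ + 1) := by
  refine .of_norm_bounded (summable_pow_div_Gamma hγ (2 * |x|)) fun k => ?_
  have hΓ : 0 < Gamma (k * γ + 1) := Gamma_pos_of_pos (by positivity)
  rw [norm_div, norm_mul, norm_pow, Real.norm_natCast, Real.norm_eq_abs,
    Real.norm_of_nonneg hΓ.le, mul_pow]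
  gcongr
  exact_mod_cast Nat.lt_two_pow_self.le

theorem integral_rpow_mul_sub_rpow {a b τ : ℝ} (ha : 0 < a) (hb : 0 < b) (hτ : 0 < τ) :
    ∫ ρ in 0..τ, ρ ^ (a - 1) * (τ - ρ) ^ (b - 1)
      = Gamma a * Gamma b / Gamma (a + b) * τ ^ (a + b - 1) := by
  have hΓ : Complex.Gamma (a + b) ≠ 0 := by
    rw [← Complex.ofReal_add, Complex.Gamma_ofReal]
    exact Complex.ofReal_ne_zero.2 (Gamma_pos_of_pos (add_pos ha hb)).ne'
  have hβ : Complex.betaIntegral a b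
      = Complex.Gamma a * Complex.Gamma b / Complex.Gamma (a + b) := by
    rw [eq_div_iff hΓ, mul_comm, ← Complex.Gamma_mul_Gamma_eq_betaIntegral (by simpa) (by simpa)]
  apply Complex.ofReal_injective
  calc ((∫ ρ in 0..τ, ρ ^ (a - 1) * (τ - ρ) ^ (b - 1) : ℝ) : ℂ)
      = ∫ ρ in 0..τ, (ρ : ℂ) ^ ((a : ℂ) - 1) * ((τ : ℂ) - ρ) ^ ((b : ℂ) - 1) := by
        rw [← intervalIntegral.integral_ofReal]
        refine intervalIntegral.integral_congr fun ρ hρ => ?_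
        rw [uIcc_of_le hτ.le] at hρ
        simp only [Complex.ofReal_mul, Complex.ofReal_cpow hρ.1,
          Complex.ofReal_cpow (sub_nonneg.2 hρ.2), Complex.ofReal_sub, Complex.ofReal_one]
    _ = (τ : ℂ) ^ ((a : ℂ) + b - 1) * Complex.betaIntegral a b :=
        Complex.betaIntegral_scaled _ _ hτ
    _ = _ := by
        rw [hβ, ← Complex.ofReal_add, Complex.Gamma_ofReal, Complex.Gamma_ofReal,
          Complex.Gamma_ofReal]
        push_cast [Complex.ofReal_cpow hτ.le]
        ring

theorem integrableOn_rpow_mul_sub_rpow {a b τ : ℝ} (ha : 0 < a) (hb : 0 < b) (hτ : 0 < τ) :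
    IntegrableOn (fun ρ => ρ ^ (a - 1) * (τ - ρ) ^ (b - 1)) (Ioc 0 τ) := by
  -- an interval integral of a non-integrable function is `0`
  refine (intervalIntegrable_iff_integrableOn_Ioc_of_le hτ.le).1 <|
    intervalIntegral.intervalIntegrable_of_integral_ne_zero ?_
  have := Gamma_pos_of_pos ha
  have := Gamma_pos_of_pos hb
  have := Gamma_pos_of_pos (add_pos ha hb)
  rw [integral_rpow_mul_sub_rpow ha hb hτ]
  positivity

theorem integral_tsum_mul_of_nonneg {α : Type*} [MeasurableSpace α] {μ : Measure α}
    {c : ℕ → ℝ} {φ : ℕ → α → ℝ} (hφ : ∀ k, 0 ≤ᵐ[μ] φ k) (hφi : ∀ k, Integrable (φ k) μ)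
    (hs : Summable fun k => |c k| * ∫ x, φ k x ∂μ) :
    ∫ x, ∑' k, c k * φ k x ∂μ = ∑' k, c k * ∫ x, φ k x ∂μ := by
  have hnorm : ∀ k, ∫ x, ‖c k * φ k x‖ ∂μ = |c k| * ∫ x, φ k x ∂μ := fun k => by
    rw [← integral_const_mul]
    refine integral_congr_ae ((hφ k).mono fun x hx => ?_)
    simp only [norm_mul, Real.norm_eq_abs, abs_of_nonneg (hx : 0 ≤ φ k x)]
  rw [← integral_tsum_of_summable_integral_norm (fun k => (hφi k).const_mul (c k))
    (by simpa only [hnorm] using hs)]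
  simp only [integral_const_mul]

noncomputable def fracPowerSeries (γ : ℝ) (q : ℕ → ℝ) (τ : ℝ) : ℝ :=
  ∑' k : ℕ, q k * τ ^ ((k : ℝ) * γ) / Gamma ((k : ℝ) * γ + 1)

section GeometricCoefficients

variable {γ C K : ℝ} {q : ℕ → ℝ}

theorem summable_fracPowerSeries (hγ : 0 < γ) (hq : ∀ k, |q k| ≤ C * K ^ k) {τ : ℝ}
    (hτ : 0 ≤ τ) : Summable fun k : ℕ => q k * τ ^ ((k : ℝ) * γ) / Gamma (k * γ + 1) := by
  refine .of_norm_bounded ((summable_pow_div_Gamma hγ (K * τ ^ γ)).mul_left C) fun k => ?_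
  have hΓ : 0 < Gamma (k * γ + 1) := Gamma_pos_of_pos (by positivity)
  rw [norm_div, norm_mul, Real.norm_eq_abs, Real.norm_of_nonneg (by positivity),
    Real.norm_of_nonneg hΓ.le, mul_div_assoc', mul_pow, ← mul_assoc, mul_comm (k : ℝ),
    rpow_mul_natCast hτ]
  gcongr
  exact hq k

theorem tendsto_fracPowerSeries_nhdsGT_zero (hγ : 0 < γ) (hq : ∀ k, |q k| ≤ C * K ^ k) :
    Tendsto (fracPowerSeries γ q) (nhdsWithin 0 (Ioi 0)) (nhds (q 0)) := by
  have hcont : ContinuousOn (fracPowerSeries γ q) (Icc 0 1) := by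
    refine continuousOn_tsum (fun k => ?_) ((summable_pow_div_Gamma hγ K).mul_left C)
      fun k τ hτ => ?_
    · exact ((continuousOn_id.rpow_const fun _ _ => Or.inr (by positivity)).const_smul
        (q k)).div_const _
    · have hΓ : 0 < Gamma (k * γ + 1) := Gamma_pos_of_pos (by positivity)
      rw [norm_div, norm_mul, Real.norm_eq_abs, Real.norm_of_nonneg (rpow_nonneg hτ.1 _),
        Real.norm_of_nonneg hΓ.le, mul_div_assoc']
      refine div_le_div_of_nonneg_right ?_ hΓ.le
      simpa using mul_le_mul (hq k) (rpow_le_one hτ.1 hτ.2 (by positivity)) (rpow_nonneg hτ.1 _)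
        ((abs_nonneg _).trans (hq k))
  have hzero : fracPowerSeries γ q 0 = q 0 := by
    rw [fracPowerSeries, tsum_eq_single 0 fun k hk => by
      rw [zero_rpow (by positivity), mul_zero, zero_div]]
    simp
  rw [← hzero]
  exact (hcont 0 ⟨le_rfl, zero_le_one⟩).mono_of_mem_nhdsWithin (Icc_mem_nhdsGT one_pos)

theorem hasDerivAt_fracPowerSeries (hγ : 0 < γ) (hq : ∀ k, |q k| ≤ C * K ^ k) {ρ : ℝ}
    (hρ : 0 < ρ) :
    HasDerivAt (fracPowerSeries γ q)
      (∑' k : ℕ, q (k + 1) / Gamma ((k + 1 : ℕ) * γ) * ρ ^ ((k + 1 : ℕ) * γ - 1)) ρ := by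
  set q' : ℕ → ℝ → ℝ := fun k y => q k * (k * γ * y ^ (k * γ - 1)) / Gamma (k * γ + 1)
  set u : ℕ → ℝ := fun k => 2 * C * γ / ρ * (k * (K * (2 * ρ) ^ γ) ^ k / Gamma (k * γ + 1))
  have hu : Summable u := (summable_nat_mul_pow_div_Gamma hγ _).mul_left _
  have hρmem : ρ ∈ Ioo (ρ / 2) (2 * ρ) := ⟨by linarith, by linarith⟩
  have hbound : ∀ k, ∀ y ∈ Ioo (ρ / 2) (2 * ρ), ‖q' k y‖ ≤ u k := by
    intro k y hy
    have hy0 : 0 < y := by linarith [hy.1]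
    have hΓ : 0 < Gamma (k * γ + 1) := Gamma_pos_of_pos (by positivity)
    have hpow : y ^ ((k : ℝ) * γ - 1) ≤ 2 / ρ * ((2 * ρ) ^ γ) ^ k :=
      calc y ^ ((k : ℝ) * γ - 1) = y ^ ((k : ℝ) * γ) * y⁻¹ := by
            rw [rpow_sub_one hy0.ne', div_eq_mul_inv]
        _ ≤ (2 * ρ) ^ ((k : ℝ) * γ) * (ρ / 2)⁻¹ := by gcongr; exacts [hy.2.le, hy.1.le]
        _ = 2 / ρ * ((2 * ρ) ^ γ) ^ k := by
            rw [mul_comm (k : ℝ), rpow_mul_natCast (by positivity), inv_div, mul_comm]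
    rw [norm_div, norm_mul, Real.norm_eq_abs, Real.norm_of_nonneg (by positivity),
      Real.norm_of_nonneg hΓ.le]
    calc |q k| * (k * γ * y ^ ((k : ℝ) * γ - 1)) / Gamma (k * γ + 1)
        ≤ C * K ^ k * (k * γ * (2 / ρ * ((2 * ρ) ^ γ) ^ k)) / Gamma (k * γ + 1) :=
          div_le_div_of_nonneg_right (mul_le_mul (hq k) (by gcongr) (by positivity)
            ((abs_nonneg _).trans (hq k))) hΓ.le
      _ = u k := by simp only [u]; ring
  have hderiv := hasDerivAt_tsum_of_isPreconnected (g' := q')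
    (g := fun k y => q k * y ^ ((k : ℝ) * γ) / Gamma (k * γ + 1)) hu isOpen_Ioo
    isPreconnected_Ioo
    (fun k y hy => ((hasDerivAt_rpow_const (Or.inl (by linarith [hy.1] : y ≠ 0))).const_mul
      (q k)).div_const _) hbound hρmem (summable_fracPowerSeries hγ hq hρ.le) hρmem
  refine hderiv.congr_deriv ?_
  rw [(hu.of_norm_bounded (hbound · ρ hρmem)).tsum_eq_zero_add]
  simp only [q', CharP.cast_eq_zero, zero_mul, mul_zero, zero_div, zero_add]
  refine tsum_congr fun k => ?_
  have hk : 0 < ((k + 1 : ℕ) : ℝ) * γ := by positivity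
  rw [Gamma_add_one hk.ne']
  field_simp

theorem derivWithin_Ici_of_eqOn_fracPowerSeries (hγ : 0 < γ) (hq : ∀ k, |q k| ≤ C * K ^ k)
    {g : ℝ → ℝ} (hg : EqOn g (fracPowerSeries γ q) (Ioi 0)) {ρ : ℝ} (hρ : 0 < ρ) :
    derivWithin g (Ici 0) ρ
      = ∑' k : ℕ, q (k + 1) / Gamma ((k + 1 : ℕ) * γ) * ρ ^ ((k + 1 : ℕ) * γ - 1) :=
  ((hasDerivAt_fracPowerSeries hγ hq hρ).congr_of_eventuallyEq
    (hg.eventuallyEq_of_mem (Ioi_mem_nhds hρ))).hasDerivWithinAt.derivWithin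
      (uniqueDiffOn_Ici 0 ρ hρ.le)

theorem caputo_fracPowerSeries (hγ0 : 0 < γ) (hγ1 : γ < 1)
    (hq : ∀ k, |q k| ≤ C * K ^ k) {g : ℝ → ℝ} (hg : EqOn g (fracPowerSeries γ q) (Ioi 0))
    {τ : ℝ} (hτ : 0 < τ) :
    caputo γ g τ = fracPowerSeries γ (fun k => q (k + 1)) τ := by
  have hγ' : 0 < 1 - γ := sub_pos.2 hγ1
  -- the Beta kernel with exponents `(k + 1) γ` and `1 - γ`
  set φ : ℕ → ℝ → ℝ := fun k ρ => ρ ^ ((k + 1 : ℕ) * γ - 1) * (τ - ρ) ^ (1 - γ - 1)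
  have hderiv : ∀ ρ ∈ Ioc 0 τ, derivWithin g (Ici 0) ρ * (τ - ρ) ^ (-γ)
      = ∑' k : ℕ, q (k + 1) / Gamma ((k + 1 : ℕ) * γ) * φ k ρ := by
    intro ρ hρ
    rw [derivWithin_Ici_of_eqOn_fracPowerSeries hγ0 hq hg hρ.1, ← tsum_mul_right]
    simp only [φ, mul_assoc, sub_sub_cancel_left]
  have hφ : ∀ k : ℕ, ∫ ρ in Ioc 0 τ, φ k ρ
      = Gamma ((k + 1 : ℕ) * γ) * Gamma (1 - γ) / Gamma (k * γ + 1) * τ ^ ((k : ℝ) * γ) := by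
    intro k
    rw [← intervalIntegral.integral_of_le hτ.le,
      integral_rpow_mul_sub_rpow (by positivity) hγ' hτ]
    push_cast
    ring_nf
  have hterm : ∀ k : ℕ, q (k + 1) / Gamma ((k + 1 : ℕ) * γ) * ∫ ρ in Ioc 0 τ, φ k ρ
      = Gamma (1 - γ) * (q (k + 1) * τ ^ ((k : ℝ) * γ) / Gamma (k * γ + 1)) := by
    intro k
    have : Gamma ((k + 1 : ℕ) * γ) ≠ 0 := (Gamma_pos_of_pos (by positivity)).ne'
    rw [hφ]
    field_simp
  have hφ_nonneg : ∀ k, 0 ≤ᵐ[volume.restrict (Ioc 0 τ)] φ k := fun k =>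
    ae_restrict_of_forall_mem measurableSet_Ioc fun ρ hρ =>
      mul_nonneg (rpow_nonneg hρ.1.le _) (rpow_nonneg (sub_nonneg.2 hρ.2) _)
  have hφ_int : ∀ k, Integrable (φ k) (volume.restrict (Ioc 0 τ)) := fun k =>
    integrableOn_rpow_mul_sub_rpow (by positivity) hγ' hτ
  have hq' : ∀ k, |q (k + 1)| ≤ C * K * K ^ k := fun k => by
    rw [mul_assoc, ← pow_succ']
    exact hq (k + 1)
  have hsum : Summable fun k : ℕ =>
      |q (k + 1) / Gamma ((k + 1 : ℕ) * γ)| * ∫ ρ in Ioc 0 τ, φ k ρ := by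
    refine (((summable_fracPowerSeries hγ0 hq' hτ.le).mul_left (Gamma (1 - γ))).abs).congr
      fun k => ?_
    rw [← hterm k, abs_mul, abs_of_nonneg (integral_nonneg_of_ae (hφ_nonneg k))]
  rw [caputo, intervalIntegral.integral_of_le hτ.le,
    setIntegral_congr_fun measurableSet_Ioc hderiv,
    integral_tsum_mul_of_nonneg hφ_nonneg hφ_int hsum, tsum_congr hterm, tsum_mul_left,
    fracPowerSeries, one_div, inv_mul_cancel_left₀ (Gamma_pos_of_pos hγ').ne']

end GeometricCoefficients

theorem iterated_caputo_fps_general (γ C K : ℝ) (hγ0 : 0 < γ) (hγ1 : γ < 1)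
    (p : ℕ → ℝ) (hp : ∀ n : ℕ, |p n| ≤ C * K ^ n) (f : ℝ → ℝ)
    (hf : ∀ τ : ℝ, 0 ≤ τ →
      f τ = ∑' n : ℕ, p n * τ ^ ((n : ℝ) * γ) / Real.Gamma ((n : ℝ) * γ + 1)) :
    ∀ n : ℕ,
      (∀ τ : ℝ, 0 < τ →
        ((caputo γ)^[n] f) τ
          = ∑' k : ℕ, p (n + k) * τ ^ ((k : ℝ) * γ) / Real.Gamma ((k : ℝ) * γ + 1)) ∧
      Tendsto ((caputo γ)^[n] f) (nhdsWithin 0 (Set.Ioi 0)) (nhds (p n)) := by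
  have hp_shift : ∀ n k, |p (n + k)| ≤ C * K ^ n * K ^ k := fun n k => by
    rw [mul_assoc, ← pow_add]
    exact hp (n + k)
  have hiter : ∀ n, EqOn ((caputo γ)^[n] f) (fracPowerSeries γ fun k => p (n + k)) (Ioi 0) := by
    intro n
    induction n with
    | zero => exact fun τ hτ => by simpa [fracPowerSeries] using hf τ (le_of_lt hτ)
    | succ n ih =>
      intro τ hτ
      rw [Function.iterate_succ_apply', caputo_fracPowerSeries hγ0 hγ1 (hp_shift n) ih hτ]
      simp only [fracPowerSeries, add_right_comm n 1, add_assoc]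
  intro n
  refine ⟨hiter n, ?_⟩
  simpa using (tendsto_fracPowerSeries_nhdsGT_zero hγ0 (hp_shift n)).congr'
    (hiter n).symm.eventuallyEq_nhdsWithin

/-- Iterated Caputo derivatives of a fractional power series: if `|pₙ| ≤ C Kⁿ` and
`f(τ) = Σ pₙ τ^{nγ}/Γ(nγ+1)` for `τ ≥ 0`, then for every `n` the `n`-fold iterated
Caputo derivative `D^{nγ} f` equals `Σ_k p_{n+k} τ^{kγ}/Γ(kγ+1)` on `(0,∞)` and tends
to `pₙ` as `τ → 0⁺`. -/
theorem iterated_caputo_fps (γ C K : ℝ) (hγ0 : 0 < γ) (hγ1 : γ < 1) (hC : 0 < C) (hK : 0 < K)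
    (p : ℕ → ℝ) (hp : ∀ n : ℕ, |p n| ≤ C * K ^ n) (f : ℝ → ℝ)
    (hf : ∀ τ : ℝ, 0 ≤ τ →
      f τ = ∑' n : ℕ, p n * τ ^ ((n : ℝ) * γ) / Real.Gamma ((n : ℝ) * γ + 1)) :
    ∀ n : ℕ,
      (∀ τ : ℝ, 0 < τ →
        ((caputo γ)^[n] f) τ
          = ∑' k : ℕ, p (n + k) * τ ^ ((k : ℝ) * γ) / Real.Gamma ((k : ℝ) * γ + 1)) ∧
      Tendsto ((caputo γ)^[n] f) (nhdsWithin 0 (Set.Ioi 0)) (nhds (p n)) :=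
  iterated_caputo_fps_general γ C K hγ0 hγ1 p hp f hf
end

section
/- Let 0 < γ < 1 and define ν(ζ,τ) = ζ E_γ(τ^γ) for ζ ∈ ℝ, τ ≥ 0. Then ν(ζ,0) = ζ for all ζ, and for every ζ ∈ ℝ and τ > 0, ν solves the linear time-fractional Fokker–Planck equation D^γ_τ ν(ζ,τ) = −∂_ζ(ζ ν(ζ,τ)) + ∂²_{ζζ}((ζ²/2) ν(ζ,τ)), where D^γ_τ is the Caputo time-fractional derivative. -/
/-!
Expanding, `E_γ(τ^γ) = Σ τ^{nγ}/Γ(nγ+1)`. The constant term has Caputo derivative `0`, and by a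
Beta integral the Caputo derivative of order `γ` sends `τ^{(n+1)γ}/Γ((n+1)γ+1)` to
`τ^{nγ}/Γ(nγ+1)`; hence `D^γ_τ E_γ(τ^γ) = E_γ(τ^γ)`. Differentiating and integrating termwise is
legitimate because all terms are nonnegative and `Σ rⁿ/Γ(nγ+d)` converges for every `r ≥ 0`, by the
ratio test and the log-convexity of `Γ`. In space, `ν = ζ M` with `M = E_γ(τ^γ)`, and
`-∂_ζ(ζ² M) + ∂²_ζ(ζ³ M/2) = -2ζM + 3ζM = ζM`.
-/

open MeasureTheory Real Filter

noncomputable def mittagLeffler (γ x : ℝ) : ℝ :=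
  ∑' n : ℕ, x ^ n / Real.Gamma ((n : ℝ) * γ + 1)

theorem Gamma_mul_rpow_le_Gamma_add {s t : ℝ} (hs0 : 0 < s) (hs1 : s < 1) (ht : 1 - s < t) :
    Gamma t * (t + s - 1) ^ s ≤ Gamma (t + s) := by
  have hpos : 0 < t + s - 1 := by linarith
  have hrec : Gamma (t + s) = (t + s - 1) * Gamma (t + s - 1) := by
    rw [← Gamma_add_one hpos.ne', sub_add_cancel]
  -- log-convexity between `t + s - 1` and `t + s`, which `t` splits in the ratio `s : 1 - s`
  have hconv := Gamma_mul_add_mul_le_rpow_Gamma_mul_rpow_Gamma hpos (by linarith : 0 < t + s)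
    hs0 (sub_pos.2 hs1) (add_sub_cancel s 1)
  rw [show s * (t + s - 1) + (1 - s) * (t + s) = t by ring,
    show Gamma (t + s - 1) = Gamma (t + s) / (t + s - 1) by rw [hrec]; field_simp,
    div_rpow (Gamma_pos_of_pos (by linarith)).le hpos.le, div_mul_eq_mul_div,
    ← rpow_add (Gamma_pos_of_pos (by linarith)), add_sub_cancel, rpow_one] at hconv
  exact (le_div_iff₀ (rpow_pos_of_pos hpos s)).1 hconv

theorem summable_pow_div_Gamma_mul_add {γ : ℝ} (hγ0 : 0 < γ) (hγ1 : γ < 1) {r : ℝ} (hr : 0 ≤ r)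
    (d : ℝ) : Summable fun n : ℕ => r ^ n / Gamma (n * γ + d) := by
  refine summable_of_ratio_norm_eventually_le (r := 1 / 2) (by norm_num) ?_
  have hlin : Tendsto (fun n : ℕ => n * γ + d) atTop atTop :=
    tendsto_atTop_add_const_right _ d (tendsto_natCast_atTop_atTop.atTop_mul_const hγ0)
  have hpow : Tendsto (fun n : ℕ => (n * γ + d + γ - 1) ^ γ) atTop atTop :=
    (tendsto_rpow_atTop hγ0).comp
      (tendsto_atTop_add_const_right _ (-1) (tendsto_atTop_add_const_right _ γ hlin))
  filter_upwards [hlin.eventually_gt_atTop (1 - γ), hpow.eventually_ge_atTop (2 * r)]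
    with n ht hr2
  set t : ℝ := n * γ + d
  have hΓ : 0 < Gamma t := Gamma_pos_of_pos (by linarith)
  have hΓs : 0 < Gamma (t + γ) := Gamma_pos_of_pos (by linarith)
  have hp : 0 < (t + γ - 1) ^ γ := rpow_pos_of_pos (by linarith) γ
  have hcast : ((n + 1 : ℕ) : ℝ) * γ + d = t + γ := by push_cast; ring
  rw [hcast, norm_of_nonneg (by positivity), norm_of_nonneg (by positivity), pow_succ]
  calc r ^ n * r / Gamma (t + γ) ≤ r ^ n * r / (Gamma t * (t + γ - 1) ^ γ) := by
        gcongr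
        exact Gamma_mul_rpow_le_Gamma_add hγ0 hγ1 ht
    _ ≤ r ^ n * ((t + γ - 1) ^ γ / 2) / (Gamma t * (t + γ - 1) ^ γ) := by gcongr; linarith
    _ = 1 / 2 * (r ^ n / Gamma t) := by field_simp

theorem hasDerivAt_tsum_mul_pow {𝕜 : Type*} [RCLike 𝕜] {c : ℕ → 𝕜}
    (hc : ∀ R : ℝ, 0 ≤ R → Summable fun n : ℕ => ((n : ℝ) + 1) * ‖c (n + 1)‖ * R ^ n) (x : 𝕜) :
    HasDerivAt (fun z => ∑' n, c n * z ^ n) (∑' n : ℕ, ((n : 𝕜) + 1) * c (n + 1) * x ^ n) x := by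
  have hsum : ∀ z : 𝕜, Summable fun n => c (n + 1) * z ^ (n + 1) := fun z =>
    ((hc ‖z‖ (norm_nonneg z)).mul_right ‖z‖).of_norm_bounded fun n => by
      rw [norm_mul, norm_pow, pow_succ, ← mul_assoc]
      gcongr
      exact le_mul_of_one_le_left (norm_nonneg _) (by linarith [(n.cast_nonneg : (0 : ℝ) ≤ n)])
  have hsplit : (fun z => ∑' n, c n * z ^ n) = fun z => c 0 + ∑' n, c (n + 1) * z ^ (n + 1) := by
    funext z
    rw [((summable_nat_add_iff (f := fun n => c n * z ^ n) 1).1 (hsum z)).tsum_eq_zero_add,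
      pow_zero, mul_one]
  rw [hsplit]
  have hb : ∀ n : ℕ, ∀ z ∈ Metric.ball (0 : 𝕜) (‖x‖ + 1),
      ‖((n : 𝕜) + 1) * c (n + 1) * z ^ n‖ ≤ ((n : ℝ) + 1) * ‖c (n + 1)‖ * (‖x‖ + 1) ^ n := by
    intro n z hz
    rw [mem_ball_zero_iff] at hz
    rw [norm_mul, norm_mul, norm_pow]
    have hn : ‖((n : 𝕜) + 1)‖ = (n : ℝ) + 1 := by
      exact_mod_cast RCLike.norm_natCast (K := 𝕜) (n + 1)
    rw [hn]
    gcongr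
  have hd : ∀ n : ℕ, ∀ z : 𝕜, HasDerivAt (fun z => c (n + 1) * z ^ (n + 1))
      (((n : 𝕜) + 1) * c (n + 1) * z ^ n) z := by
    intro n z
    simpa [mul_comm, mul_left_comm, mul_assoc] using
      (hasDerivAt_pow (n + 1) z).const_mul (c (n + 1))
  exact HasDerivAt.const_add _ <| hasDerivAt_tsum_of_isPreconnected (hc (‖x‖ + 1) (by positivity))
    Metric.isOpen_ball (convex_ball 0 (‖x‖ + 1)).isPreconnected
    (fun n z _ => hd n z) hb (Metric.mem_ball_self (by positivity)) (hsum 0)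
    (by simp)

theorem integral_rpow_mul_rpow_sub {a b τ : ℝ} (ha : 0 < a) (hb : 0 < b) (hτ : 0 < τ) :
    ∫ ρ in 0..τ, ρ ^ (a - 1) * (τ - ρ) ^ (b - 1)
      = τ ^ (a + b - 1) * (Gamma a * Gamma b / Gamma (a + b)) := by
  have hC := Complex.betaIntegral_scaled a b hτ
  rw [Complex.betaIntegral_eq_Gamma_mul_div _ _ (by simpa using ha) (by simpa using hb)] at hC
  have hcongr : ∫ ρ in 0..τ, (ρ : ℂ) ^ ((a : ℂ) - 1) * ((τ : ℂ) - ρ) ^ ((b : ℂ) - 1)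
      = ∫ ρ in 0..τ, ((ρ ^ (a - 1) * (τ - ρ) ^ (b - 1) : ℝ) : ℂ) := by
    refine intervalIntegral.integral_congr fun ρ hρ => ?_
    rw [Set.uIcc_of_le hτ.le] at hρ
    push_cast
    rw [Complex.ofReal_cpow hρ.1, Complex.ofReal_cpow (sub_nonneg.2 hρ.2)]
    push_cast
    rfl
  rw [hcongr, intervalIntegral.integral_ofReal, ← Complex.ofReal_add, Complex.Gamma_ofReal,
    Complex.Gamma_ofReal, Complex.Gamma_ofReal] at hC
  rw [← Complex.ofReal_one, ← Complex.ofReal_sub, ← Complex.ofReal_cpow hτ.le] at hC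
  exact_mod_cast hC

theorem intervalIntegrable_rpow_mul_rpow_sub {a b τ : ℝ} (ha : 0 < a) (hb : 0 < b)
    (hτ : 0 < τ) : IntervalIntegrable (fun ρ => ρ ^ (a - 1) * (τ - ρ) ^ (b - 1)) volume 0 τ := by
  refine intervalIntegral.intervalIntegrable_of_integral_ne_zero ?_
  rw [integral_rpow_mul_rpow_sub ha hb hτ]
  have := Gamma_pos_of_pos ha
  have := Gamma_pos_of_pos hb
  have := Gamma_pos_of_pos (add_pos ha hb)
  positivity

theorem integral_rpow_div_Gamma_mul_rpow_neg {β γ τ : ℝ} (hβ : 0 < β) (hγ : γ < 1)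
    (hτ : 0 < τ) :
    ∫ ρ in 0..τ, ρ ^ (β - 1) / Gamma β * (τ - ρ) ^ (-γ)
      = Gamma (1 - γ) * (τ ^ (β - γ) / Gamma (β - γ + 1)) := by
  have h := integral_rpow_mul_rpow_sub hβ (sub_pos.2 hγ) hτ
  rw [sub_sub_cancel_left, show β + (1 - γ) - 1 = β - γ by ring,
    show β + (1 - γ) = β - γ + 1 by ring] at h
  simp_rw [div_mul_eq_mul_div, intervalIntegral.integral_div, h]
  field_simp [(Gamma_pos_of_pos hβ).ne']

theorem mittagLeffler_zero (γ : ℝ) : mittagLeffler γ 0 = 1 := by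
  rw [mittagLeffler, tsum_eq_single 0 fun n hn => by simp [hn]]
  simp

theorem hasDerivAt_mittagLeffler {γ : ℝ} (hγ0 : 0 < γ) (hγ1 : γ < 1) (x : ℝ) :
    HasDerivAt (mittagLeffler γ) (γ⁻¹ * ∑' n : ℕ, x ^ n / Gamma ((n + 1) * γ)) x := by
  have hcoeff : ∀ n : ℕ,
      ((n : ℝ) + 1) * (Gamma ((n + 1 : ℕ) * γ + 1))⁻¹ = γ⁻¹ * (Gamma ((n + 1) * γ))⁻¹ := by
    intro n
    have hpos : 0 < ((n : ℝ) + 1) * γ := by positivity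
    push_cast
    rw [Gamma_add_one hpos.ne']
    field_simp
  have hML : mittagLeffler γ = fun z => ∑' n : ℕ, (Gamma (n * γ + 1))⁻¹ * z ^ n := by
    funext z
    simp_rw [mittagLeffler, inv_mul_eq_div]
  rw [hML]
  refine (hasDerivAt_tsum_mul_pow (fun R hR => ?_) x).congr_deriv ?_
  · refine ((summable_pow_div_Gamma_mul_add hγ0 hγ1 hR γ).mul_left γ⁻¹).congr fun n => ?_
    rw [norm_inv, norm_of_nonneg (Gamma_pos_of_pos (by positivity)).le, hcoeff]
    ring_nf
  · rw [← tsum_mul_left]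
    congr 1 with n
    rw [hcoeff]
    ring

theorem hasDerivAt_mittagLeffler_rpow {γ ρ : ℝ} (hγ0 : 0 < γ) (hγ1 : γ < 1) (hρ : 0 < ρ) :
    HasDerivAt (fun ρ => mittagLeffler γ (ρ ^ γ))
      (∑' n : ℕ, ρ ^ ((n + 1) * γ - 1) / Gamma ((n + 1) * γ)) ρ := by
  refine ((hasDerivAt_mittagLeffler hγ0 hγ1 (ρ ^ γ)).comp ρ
    (hasDerivAt_rpow_const (p := γ) (Or.inl hρ.ne'))).congr_deriv ?_
  rw [← tsum_mul_left, ← tsum_mul_right]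
  congr 1 with n
  have hpow : ρ ^ ((n + 1) * γ - 1) = (ρ ^ γ) ^ n * ρ ^ (γ - 1) := by
    rw [← rpow_natCast, ← rpow_mul hρ.le, ← rpow_add hρ]
    ring_nf
  rw [hpow]
  field_simp

theorem integral_deriv_mittagLeffler_rpow_mul_rpow_neg {γ τ : ℝ} (hγ0 : 0 < γ) (hγ1 : γ < 1)
    (hτ : 0 < τ) :
    ∫ ρ in 0..τ, deriv (fun ρ => mittagLeffler γ (ρ ^ γ)) ρ * (τ - ρ) ^ (-γ)
      = Gamma (1 - γ) * mittagLeffler γ (τ ^ γ) := by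
  set F : ℕ → ℝ → ℝ := fun n ρ =>
    ρ ^ ((n + 1) * γ - 1) / Gamma ((n + 1) * γ) * (τ - ρ) ^ (-γ) with hF
  have hβ : ∀ n : ℕ, 0 < ((n : ℝ) + 1) * γ := fun n => by positivity
  have hF_integral : ∀ n : ℕ,
      ∫ ρ in Set.Ioc 0 τ, F n ρ = Gamma (1 - γ) * ((τ ^ γ) ^ n / Gamma (n * γ + 1)) := by
    intro n
    rw [← intervalIntegral.integral_of_le hτ.le,
      integral_rpow_div_Gamma_mul_rpow_neg (hβ n) hγ1 hτ, ← rpow_natCast, ← rpow_mul hτ.le]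
    ring_nf
  have hF_integrable : ∀ n : ℕ, IntegrableOn (F n) (Set.Ioc 0 τ) := by
    intro n
    have h := ((intervalIntegrable_rpow_mul_rpow_sub (hβ n) (sub_pos.2 hγ1) hτ).const_mul
      (Gamma ((n + 1) * γ))⁻¹).1
    refine h.congr_fun (fun ρ _ => ?_) measurableSet_Ioc
    simp only [hF, sub_sub_cancel_left]
    ring
  have hF_nonneg : ∀ n : ℕ, ∀ ρ ∈ Set.Ioc 0 τ, 0 ≤ F n ρ := fun n ρ hρ => by
    have := Gamma_pos_of_pos (hβ n)
    have := sub_nonneg.2 hρ.2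
    have := hρ.1.le
    positivity
  have hsummable : Summable fun n : ℕ => ∫ ρ in Set.Ioc 0 τ, ‖F n ρ‖ := by
    refine ((summable_pow_div_Gamma_mul_add hγ0 hγ1 (rpow_nonneg hτ.le γ) 1).mul_left
      (Gamma (1 - γ))).congr fun n => ?_
    rw [← hF_integral]
    exact setIntegral_congr_fun measurableSet_Ioc fun ρ hρ =>
      (norm_of_nonneg (hF_nonneg n ρ hρ)).symm
  calc ∫ ρ in 0..τ, deriv (fun ρ => mittagLeffler γ (ρ ^ γ)) ρ * (τ - ρ) ^ (-γ)
      = ∫ ρ in Set.Ioc 0 τ, ∑' n, F n ρ := by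
        rw [intervalIntegral.integral_of_le hτ.le]
        refine setIntegral_congr_fun measurableSet_Ioc fun ρ hρ => ?_
        rw [(hasDerivAt_mittagLeffler_rpow hγ0 hγ1 hρ.1).deriv, ← tsum_mul_right]
    _ = ∑' n, ∫ ρ in Set.Ioc 0 τ, F n ρ :=
        (integral_tsum_of_summable_integral_norm hF_integrable hsummable).symm
    _ = Gamma (1 - γ) * mittagLeffler γ (τ ^ γ) := by
        rw [tsum_congr hF_integral, tsum_mul_left, mittagLeffler]

noncomputable def caputoDeriv (γ : ℝ) (f : ℝ → ℝ) (τ : ℝ) : ℝ :=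
  1 / Gamma (1 - γ) * ∫ ρ in 0..τ, deriv f ρ * (τ - ρ) ^ (-γ)

theorem caputoDeriv_const_mul (γ c : ℝ) (f : ℝ → ℝ) (τ : ℝ) :
    caputoDeriv γ (fun ρ => c * f ρ) τ = c * caputoDeriv γ f τ := by
  simp only [caputoDeriv, deriv_const_mul_field', mul_assoc, intervalIntegral.integral_const_mul]
  ring

theorem caputoDeriv_mittagLeffler_rpow {γ τ : ℝ} (hγ0 : 0 < γ) (hγ1 : γ < 1) (hτ : 0 < τ) :
    caputoDeriv γ (fun ρ => mittagLeffler γ (ρ ^ γ)) τ = mittagLeffler γ (τ ^ γ) := by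
  rw [caputoDeriv, integral_deriv_mittagLeffler_rpow_mul_rpow_neg hγ0 hγ1 hτ]
  field_simp [(Gamma_pos_of_pos (sub_pos.2 hγ1)).ne']

theorem fokkerPlanck_rhs_linear (M ζ : ℝ) :
    -deriv (fun z => z * (z * M)) ζ + deriv (deriv fun z => z ^ 2 / 2 * (z * M)) ζ = ζ * M := by
  have hflux : (fun z => z * (z * M)) = fun z => M * z ^ 2 := by funext z; ring
  have hdiffusion : (fun z => z ^ 2 / 2 * (z * M)) = fun z => M / 2 * z ^ 3 := by funext z; ring
  simp only [hflux, hdiffusion, deriv_const_mul_field', deriv_pow_field]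
  ring

/-- The function `ν(ζ,τ) = ζ E_γ(τ^γ)` satisfies `ν(ζ,0) = ζ` and solves the linear
time-fractional Fokker–Planck equation
`D^γ_τ ν = −∂_ζ(ζν) + ∂²_{ζζ}((ζ²/2)ν)` for `τ > 0`,
where `D^γ_τ` is the Caputo time-fractional derivative. -/
theorem tffpe_example2 (γ : ℝ) (hγ0 : 0 < γ) (hγ1 : γ < 1)
    (ν : ℝ → ℝ → ℝ) (hν : ν = fun ζ τ => ζ * mittagLeffler γ (τ ^ γ)) :
    (∀ ζ : ℝ, ν ζ 0 = ζ) ∧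
    ∀ (ζ τ : ℝ), 0 < τ →
      (1 / Real.Gamma (1 - γ)) * (∫ ρ in (0:ℝ)..τ, deriv (fun ρ => ν ζ ρ) ρ * (τ - ρ) ^ (-γ))
        = -(deriv (fun z => z * ν z τ) ζ)
          + deriv (deriv fun z => z ^ 2 / 2 * ν z τ) ζ := by
  subst hν
  refine ⟨fun ζ => by simp [zero_rpow hγ0.ne', mittagLeffler_zero], fun ζ τ hτ => ?_⟩
  change caputoDeriv γ (fun ρ => ζ * mittagLeffler γ (ρ ^ γ)) τ = _
  rw [caputoDeriv_const_mul, caputoDeriv_mittagLeffler_rpow hγ0 hγ1 hτ, fokkerPlanck_rhs_linear]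
end
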